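/- For every s ∈ ℂ with Re(s) > 1: 𝒞(10,1;s) = (1/2)·𝒞(0,1;s) − (5/2)·𝒞(4,1;s) + (5/2)·𝒞(8,1;s); that is, Σ' cos¹⁰(θ_{p₁,p₂})/(p₁²+p₂²)^s = (1/2)·Σ' 1/(p₁²+p₂²)^s − (5/2)·Σ' cos⁴(θ_{p₁,p₂})/(p₁²+p₂²)^s + (5/2)·Σ' cos⁸(θ_{p₁,p₂})/(p₁²+p₂²)^s. -/

import Mathlib

/-- The angle `θ_{p₁,p₂} = arg(p₁ + i p₂)` of a lattice point. -/
noncomputable def latticeAngle (p : ℤ × ℤ) : ℝ :=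
  Complex.arg ((p.1 : ℂ) + (p.2 : ℂ) * Complex.I)

/-- The angular lattice sum `𝒞(n,m;s)`. -/
noncomputable def latC (n m : ℕ) (s : ℂ) : ℂ :=
  ∑' p : {p : ℤ × ℤ // p ≠ 0},
    ((Real.cos ((m : ℝ) * latticeAngle p.1) : ℂ)) ^ n /
      (((p.1.1 : ℂ)) ^ 2 + ((p.1.2 : ℂ)) ^ 2) ^ s

/-- The angular lattice sum `𝒮(n,m;s)`. -/
noncomputable def latS (n m : ℕ) (s : ℂ) : ℂ :=
  ∑' p : {p : ℤ × ℤ // p ≠ 0},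
    ((Real.sin ((m : ℝ) * latticeAngle p.1) : ℂ)) ^ n /
      (((p.1.1 : ℂ)) ^ 2 + ((p.1.2 : ℂ)) ^ 2) ^ s

/-!
A quarter turn `(p₁, p₂) ↦ (-p₂, p₁)` of the punctured lattice preserves `p₁² + p₂²` and sends
`cos θ` to `-sin θ`, so `𝒞(n,1;s) = 𝒮(n,1;s)` for even `n`. On the circle `x² + y² = 1` one has
`x¹⁰ + y¹⁰ = 1 - (5/2)(x⁴ + y⁴) + (5/2)(x⁸ + y⁸)`; summing this against `(p₁² + p₂²)^(-s)`, which is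
absolutely summable for `Re s > 1`, gives `2 𝒞(10,1;s) = 𝒞(0,1;s) - 5 𝒞(4,1;s) + 5 𝒞(8,1;s)`.
-/

lemma max_abs_pos_of_ne_zero {p : ℤ × ℤ} (hp : p ≠ 0) : 0 < max |(p.1 : ℝ)| |(p.2 : ℝ)| := by
  by_contra! h
  exact hp (Prod.ext (by simpa using (le_max_left _ _).trans h)
    (by simpa using (le_max_right _ _).trans h))

lemma sq_max_abs_le_sq_add_sq (a b : ℝ) : max |a| |b| ^ 2 ≤ a ^ 2 + b ^ 2 := by
  rcases max_cases |a| |b| with ⟨h, _⟩ | ⟨h, _⟩ <;> rw [h, sq_abs] <;> nlinarith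

lemma sq_add_sq_pos_of_ne_zero {p : ℤ × ℤ} (hp : p ≠ 0) :
    (0 : ℝ) < (p.1 : ℝ) ^ 2 + (p.2 : ℝ) ^ 2 :=
  (pow_pos (max_abs_pos_of_ne_zero hp) 2).trans_le (sq_max_abs_le_sq_add_sq _ _)

lemma summable_sq_add_sq_rpow_neg {r : ℝ} (hr : 1 < r) :
    Summable fun p : {p : ℤ × ℤ // p ≠ 0} => ((p.1.1 : ℝ) ^ 2 + (p.1.2 : ℝ) ^ 2) ^ (-r) := by
  have hinj : Function.Injective fun p : {p : ℤ × ℤ // p ≠ 0} => ![p.1.1, p.1.2] :=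
    fun p q h => Subtype.ext (Prod.ext (congrFun h 0) (congrFun h 1))
  refine ((EisensteinSeries.summable_one_div_norm_rpow (k := 2 * r) (by linarith)).comp_injective
    hinj).of_nonneg_of_le (fun p => by have := sq_add_sq_pos_of_ne_zero p.2; positivity) fun p => ?_
  have hmax : ‖![p.1.1, p.1.2]‖ = max |(p.1.1 : ℝ)| |(p.1.2 : ℝ)| := by
    simp [EisensteinSeries.norm_eq_max_natAbs, Nat.cast_max, Nat.cast_natAbs]
  have hpos := max_abs_pos_of_ne_zero p.2
  simp only [Function.comp_apply, hmax]
  calc _ ≤ (max |(p.1.1 : ℝ)| |(p.1.2 : ℝ)| ^ 2) ^ (-r) :=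
        Real.rpow_le_rpow_of_nonpos (by positivity) (sq_max_abs_le_sq_add_sq _ _) (by linarith)
    _ = _ := by rw [← Real.rpow_natCast, ← Real.rpow_mul hpos.le]; ring_nf

lemma norm_sq_add_sq_cpow {p : ℤ × ℤ} (hp : p ≠ 0) (s : ℂ) :
    ‖((p.1 : ℂ) ^ 2 + (p.2 : ℂ) ^ 2) ^ s‖ = ((p.1 : ℝ) ^ 2 + (p.2 : ℝ) ^ 2) ^ s.re := by
  rw [← Complex.norm_cpow_eq_rpow_re_of_pos (sq_add_sq_pos_of_ne_zero hp)]
  push_cast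
  rfl

lemma summable_div_sq_add_sq_cpow {s : ℂ} (hs : 1 < s.re) {f : {p : ℤ × ℤ // p ≠ 0} → ℂ} {C : ℝ}
    (hf : ∀ p, ‖f p‖ ≤ C) :
    Summable fun p : {p : ℤ × ℤ // p ≠ 0} => f p / ((p.1.1 : ℂ) ^ 2 + (p.1.2 : ℂ) ^ 2) ^ s := by
  refine ((summable_sq_add_sq_rpow_neg hs).mul_left C).of_norm_bounded fun p => ?_
  have hpos := sq_add_sq_pos_of_ne_zero p.2
  rw [norm_div, norm_sq_add_sq_cpow p.2, Real.rpow_neg hpos.le, div_eq_mul_inv]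
  exact mul_le_mul_of_nonneg_right (hf p) (by positivity)

lemma hasSum_latC (n m : ℕ) {s : ℂ} (hs : 1 < s.re) :
    HasSum (fun p : {p : ℤ × ℤ // p ≠ 0} => (Real.cos (m * latticeAngle p.1) : ℂ) ^ n /
      ((p.1.1 : ℂ) ^ 2 + (p.1.2 : ℂ) ^ 2) ^ s) (latC n m s) :=
  (summable_div_sq_add_sq_cpow hs (C := 1) fun p => by
    rw [norm_pow, Complex.norm_real, Real.norm_eq_abs]
    exact pow_le_one₀ (abs_nonneg _) (Real.abs_cos_le_one _)).hasSum

lemma hasSum_latS (n m : ℕ) {s : ℂ} (hs : 1 < s.re) :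
    HasSum (fun p : {p : ℤ × ℤ // p ≠ 0} => (Real.sin (m * latticeAngle p.1) : ℂ) ^ n /
      ((p.1.1 : ℂ) ^ 2 + (p.1.2 : ℂ) ^ 2) ^ s) (latS n m s) :=
  (summable_div_sq_add_sq_cpow hs (C := 1) fun p => by
    rw [norm_pow, Complex.norm_real, Real.norm_eq_abs]
    exact pow_le_one₀ (abs_nonneg _) (Real.abs_sin_le_one _)).hasSum

lemma Complex.cos_arg_I_mul {z : ℂ} (hz : z ≠ 0) : Real.cos (arg (I * z)) = -Real.sin (arg z) := by
  rw [Complex.cos_arg (mul_ne_zero I_ne_zero hz), Complex.sin_arg]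
  simp [neg_div]

def rotateQuarterTurn : {p : ℤ × ℤ // p ≠ 0} ≃ {p : ℤ × ℤ // p ≠ 0} :=
  Equiv.subtypeEquiv
    { toFun := fun p => (-p.2, p.1), invFun := fun p => (p.2, -p.1),
      left_inv := fun _ => by simp, right_inv := fun _ => by simp }
    fun p => by simp [Prod.ext_iff, and_comm]

@[simp]
lemma coe_rotateQuarterTurn (p : {p : ℤ × ℤ // p ≠ 0}) :
    (rotateQuarterTurn p : ℤ × ℤ) = (-p.1.2, p.1.1) :=
  rfl

lemma cos_latticeAngle_rotateQuarterTurn (p : {p : ℤ × ℤ // p ≠ 0}) :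
    Real.cos (latticeAngle (rotateQuarterTurn p).1) = -Real.sin (latticeAngle p.1) := by
  have hz : (p.1.1 : ℂ) + p.1.2 * Complex.I ≠ 0 := by
    simpa [Complex.ext_iff, Prod.ext_iff] using p.2
  rw [latticeAngle, latticeAngle, ← Complex.cos_arg_I_mul hz, coe_rotateQuarterTurn]
  push_cast
  congr 2
  linear_combination (-(p.1.2 : ℂ)) * Complex.I_sq

lemma latC_one_eq_latS_one_of_even {n : ℕ} (hn : Even n) (s : ℂ) : latC n 1 s = latS n 1 s := by
  rw [latC, ← rotateQuarterTurn.tsum_eq]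
  refine tsum_congr fun p => ?_
  rw [Nat.cast_one, one_mul, one_mul, cos_latticeAngle_rotateQuarterTurn, Complex.ofReal_neg,
    hn.neg_pow, coe_rotateQuarterTurn, Int.cast_neg, neg_sq, add_comm]

lemma pow_ten_add_pow_ten_of_sq_add_sq_eq_one {K : Type*} [Field K] [CharZero K] {a b : K}
    (h : a ^ 2 + b ^ 2 = 1) :
    a ^ 10 + b ^ 10 = 1 - 5 / 2 * (a ^ 4 + b ^ 4) + 5 / 2 * (a ^ 8 + b ^ 8) := by
  grind

/-- For `Re s > 1`, `𝒞(10,1;s) = (1/2) 𝒞(0,1;s) - (5/2) 𝒞(4,1;s) + (5/2) 𝒞(8,1;s)`. -/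
theorem latC_ten_one_eq (s : ℂ) (hs : 1 < s.re) :
    latC 10 1 s = (1 / 2) * latC 0 1 s - (5 / 2) * latC 4 1 s + (5 / 2) * latC 8 1 s := by
  have hcomb := ((hasSum_latC 0 1 hs).sub
    (((hasSum_latC 4 1 hs).add (hasSum_latS 4 1 hs)).mul_left (5 / 2))).add
    (((hasSum_latC 8 1 hs).add (hasSum_latS 8 1 hs)).mul_left (5 / 2))
  have h10 := ((hasSum_latC 10 1 hs).add (hasSum_latS 10 1 hs)).unique <| hcomb.congr_fun fun p => by
    have h := pow_ten_add_pow_ten_of_sq_add_sq_eq_one (K := ℂ) (a := Real.cos (latticeAngle p.1))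
      (b := Real.sin (latticeAngle p.1)) (by exact_mod_cast Real.cos_sq_add_sin_sq _)
    simp only [Nat.cast_one, one_mul, pow_zero, div_eq_mul_inv]
    linear_combination (((p.1.1 : ℂ) ^ 2 + (p.1.2 : ℂ) ^ 2) ^ s)⁻¹ * h
  rw [← latC_one_eq_latS_one_of_even (by decide : Even 10),
    ← latC_one_eq_latS_one_of_even (by decide : Even 4),
    ← latC_one_eq_latS_one_of_even (by decide : Even 8)] at h10
  linear_combination h10 / 2
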